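/- arXiv:1612.03754 — 6 statements merged into one kernel-verified Lean document; each statement's English description precedes it below -/
import Mathlib

section
/- Let G be a commutative group, let h_1, …, h_s ∈ G generate G as a group, and let n_1, …, n_s be nonnegative integers. If f : G → ℂ satisfies Δ_{h_k}^{n_k + 1} f = 0 for every k = 1, …, s, then f is a polynomial of degree at most n_1 + ⋯ + n_s, i.e. Δ_{g_{N+1}} Δ_{g_N} ⋯ Δ_{g_1} f = 0 for all g_1, …, g_{N+1} ∈ G, where N = n_1 + ⋯ + n_s. -/
noncomputable section

/-- Forward difference operator: `Δ_h f x = f (x + h) - f x`. -/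
def fwdDiffOp {G M : Type*} [AddCommGroup G] [AddCommGroup M] (h : G) (f : G → M) : G → M :=
  fun x => f (x + h) - f x

/-- Mixed differences along a list of steps; the head of the list is applied outermost,
so `mixedDiff [g_m, …, g_1] f = Δ_{g_m} ⋯ Δ_{g_1} f`. -/
def mixedDiff {G M : Type*} [AddCommGroup G] [AddCommGroup M] : List G → (G → M) → (G → M)
  | [], f => f
  | h :: t, f => fwdDiffOp h (mixedDiff t f)

/-- Translation operator: `τ_h f x = f (x + h)`. -/
def transOp {G M : Type*} [AddCommGroup G] (h : G) (f : G → M) : G → M :=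
  fun x => f (x + h)

/-- The span of all translates of `g`. -/
def tauSpan {G : Type*} [AddCommGroup G] (g : G → ℂ) : Submodule ℂ (G → ℂ) :=
  Submodule.span ℂ (Set.range fun h : G => transOp h g)

/-- `f` is an exponential polynomial iff the span of its translates is finite dimensional. -/
def IsExpPoly {G : Type*} [AddCommGroup G] (f : G → ℂ) : Prop :=
  FiniteDimensional ℂ (tauSpan f)

/-!
Let `k[G]` act on functions `G → M` by translation, so that `Δ_a` is the action of
`δ_a = [a] - 1`. Since `δ_(a + b) = δ_a [b] + δ_b` and `δ_(-a) = -[-a] δ_a`, every `δ_g` lies in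
the ideal `J` generated by the `δ_(h_k)`. By pigeonhole, `J ^ (N + 1)` lies in the ideal generated
by the `δ_(h_k) ^ (n_k + 1)`, which annihilate `f`.
-/

namespace Ideal

variable {R : Type*} [CommSemiring R]

theorem sup_pow_add_add_one_le (I J : Ideal R) (m n : ℕ) :
    (I ⊔ J) ^ (m + n + 1) ≤ I ^ (m + 1) ⊔ J ^ (n + 1) := by
  rw [← add_eq_sup, ← add_eq_sup, add_pow, sum_eq_sup]
  refine Finset.sup_le fun i _ => ?_
  by_cases hm : m + 1 ≤ i
  · exact mul_le_left.trans (mul_le_left.trans ((pow_le_pow_right hm).trans le_sup_left))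
  · refine mul_le_left.trans (mul_le_right.trans ((pow_le_pow_right ?_).trans le_sup_right))
    lia

theorem finset_sup_pow_sum_add_one_le {ι : Type*} (s : Finset ι) (I : ι → Ideal R)
    (n : ι → ℕ) :
    s.sup I ^ (∑ i ∈ s, n i + 1) ≤ s.sup fun i => I i ^ (n i + 1) := by
  classical
  induction s using Finset.induction_on with
  | empty => simp
  | insert a s ha ih =>
    rw [Finset.sup_insert, Finset.sup_insert, Finset.sum_insert ha, add_assoc]
    exact (sup_pow_add_add_one_le _ _ _ _).trans (sup_le_sup_left ih _)

end Ideal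

section TranslationAction

open AddMonoidAlgebra

variable {G k M : Type*} [AddCommMonoid G] [CommSemiring k] [AddCommMonoid M] [Module k M]

variable (k M) in
def translationRep : Multiplicative G →* Module.End k (G → M) where
  toFun a := LinearMap.funLeft k M (· + a.toAdd)
  map_one' := by ext f x; simp [LinearMap.funLeft]
  map_mul' a b := by ext f x; simp [LinearMap.funLeft, add_assoc]

variable (k M) in
def translationAction : AddMonoidAlgebra k G →ₐ[k] Module.End k (G → M) :=
  AddMonoidAlgebra.lift k _ G (translationRep k M)

variable (k) in
def translationAnnihilator (f : G → M) : Ideal (AddMonoidAlgebra k G) where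
  carrier := {a | translationAction k M a f = 0}
  zero_mem' := by simp
  add_mem' {a b} ha hb := by simp_all
  smul_mem' c a ha := by simp_all [Module.End.mul_apply]

end TranslationAction

section DifferenceElement

open AddMonoidAlgebra

variable {G k M : Type*} [AddCommGroup G] [CommRing k] [AddCommGroup M] [Module k M]

variable (k) in
def diffElem (a : G) : AddMonoidAlgebra k G := of' k G a - 1

theorem coe_translationAction_diffElem (a : G) :
    ⇑(translationAction k M (diffElem k a)) = fwdDiffOp a := by
  ext f x
  simp [translationAction, diffElem, of', translationRep, fwdDiffOp, LinearMap.funLeft]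

theorem coe_translationAction_diffElem_pow (a : G) (m : ℕ) :
    ⇑(translationAction k M (diffElem k a ^ m)) = (fwdDiffOp a)^[m] := by
  rw [map_pow, Module.End.coe_pow, coe_translationAction_diffElem]

theorem mixedDiff_eq_translationAction (L : List G) (f : G → M) :
    mixedDiff L f = translationAction k M (L.map (diffElem k)).prod f := by
  induction L with
  | nil => simp [mixedDiff]
  | cons a t ih =>
    rw [mixedDiff, ih, List.map_cons, List.prod_cons, map_mul, Module.End.mul_apply,
      coe_translationAction_diffElem]

theorem diffElem_mem_span_of_mem_closure {S : Set G} {g : G}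
    (hg : g ∈ AddSubgroup.closure S) : diffElem k g ∈ Ideal.span (diffElem k '' S) := by
  induction hg using AddSubgroup.closure_induction with
  | mem a ha => exact Ideal.subset_span ⟨a, ha, rfl⟩
  | zero => simp [diffElem, of', ← one_def]
  | add a b _ _ ha hb =>
    have : diffElem k (a + b) = diffElem k a * of' k G b + diffElem k b := by
      simp only [diffElem, of', sub_mul, one_mul, single_mul_single, mul_one]
      ring
    rw [this]
    exact Ideal.add_mem _ (Ideal.mul_mem_right _ _ ha) hb
  | neg a _ ha =>
    have : diffElem k (-a) = -(of' k G (-a) * diffElem k a) := by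
      simp only [diffElem, of', mul_sub, mul_one, single_mul_single, neg_add_cancel, ← one_def]
      ring
    rw [this]
    exact neg_mem (Ideal.mul_mem_left _ _ ha)

theorem span_diffElem_pow_le_translationAnnihilator {ι : Type*} [Fintype ι] (h : ι → G)
    (n : ι → ℕ) (f : G → M) (hf : ∀ i, (fwdDiffOp (h i))^[n i + 1] f = 0) :
    Ideal.span (Set.range (diffElem k ∘ h)) ^ (∑ i, n i + 1) ≤
      translationAnnihilator k f := by
  rw [Ideal.span, Submodule.span_range_eq_iSup, ← Finset.sup_univ_eq_iSup]
  refine (Ideal.finset_sup_pow_sum_add_one_le _ _ n).trans (Finset.sup_le fun i _ => ?_)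
  rw [← Ideal.span, Ideal.span_singleton_pow, Ideal.span_singleton_le_iff_mem]
  exact (congrFun (coe_translationAction_diffElem_pow (h i) _) f).trans (hf i)

end DifferenceElement

/-- **Montel-type theorem, unmixed differences (Theorem 1, algebraic part).**
If `h 1, …, h s` generate the commutative group `G` and `Δ_{h k}^{n k + 1} f = 0` for each `k`,
then `f` is a polynomial of degree at most `N = n 1 + ⋯ + n s`, i.e.
`Δ_{g_{N+1}} ⋯ Δ_{g_1} f = 0` for all `g_1, …, g_{N+1} ∈ G`. -/
theorem montel_unmixed {G : Type*} [AddCommGroup G] {s : ℕ}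
    (h : Fin s → G) (n : Fin s → ℕ)
    (hgen : AddSubgroup.closure (Set.range h) = ⊤)
    (f : G → ℂ)
    (hf : ∀ k : Fin s, (fwdDiffOp (h k))^[n k + 1] f = 0) :
    ∀ g : Fin ((∑ k, n k) + 1) → G, mixedDiff (List.ofFn g).reverse f = 0 := by
  intro g
  set J := Ideal.span (Set.range (diffElem ℂ ∘ h)) with hJ
  have hgJ (a : G) : diffElem ℂ a ∈ J := by
    rw [hJ, Set.range_comp]
    exact diffElem_mem_span_of_mem_closure (hgen ▸ AddSubgroup.mem_top a)
  have hprod : ∏ i, diffElem ℂ (g i) ∈ J ^ (∑ k, n k + 1) := by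
    simpa using Ideal.prod_mem_prod (s := Finset.univ) (I := fun _ => J) fun i _ => hgJ (g i)
  rw [mixedDiff_eq_translationAction (k := ℂ), List.map_reverse, List.prod_reverse,
    List.map_ofFn, List.prod_ofFn]
  exact span_diffElem_pow_le_translationAnnihilator h n f hf hprod
end
end

section
/- Let G be a commutative topological group, let h_1, …, h_s ∈ G topologically generate G (the closure of the subgroup generated by {h_1, …, h_s} is all of G), and let n_1, …, n_s be nonnegative integers. If f : G → ℂ is continuous and satisfies Δ_{h_k}^{n_k + 1} f = 0 for every k = 1, …, s, then f is a polynomial of degree at most n_1 + ⋯ + n_s, i.e. Δ_{g_{N+1}} Δ_{g_N} ⋯ Δ_{g_1} f = 0 for all g_1, …, g_{N+1} ∈ G, where N = n_1 + ⋯ + n_s. -/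
/-!
Let `H` be the subgroup generated by the `h k`, and `S m` the additive subgroup spanned by the
translates of the `m`-fold differences of `f` with steps among the `h k`. The identities
`Δ_{a+b} = τ_b Δ_a + Δ_b` and `Δ_{-a} = -τ_{-a} Δ_a` show that `Δ_g` maps `S m` into `S (m + 1)`
for every `g ∈ H`, so `N + 1` differences with steps in `H` land in `S (N + 1)`. Differences
commute, so by pigeonhole every generator of `S (N + 1)` contains `Δ_{h k}^{n k + 1} f = 0` for
some `k`, hence `S (N + 1) = 0`. Finally `(g_1, …, g_{N+1}) ↦ Δ_{g_1} ⋯ Δ_{g_{N+1}} f` is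
continuous and vanishes on the dense set `H^{N+1}`.
-/


noncomputable section

section Montel

variable {G M : Type*} [AddCommGroup G]

lemma transOp_transOp (a b : G) (F : G → M) : transOp a (transOp b F) = transOp (a + b) F := by
  funext x
  simp only [transOp, add_assoc]

lemma transOp_zero (F : G → M) : transOp (0 : G) F = F := by
  funext x
  simp [transOp]

variable [AddCommGroup M]

lemma fwdDiffOp_add_right (a : G) (F₁ F₂ : G → M) :
    fwdDiffOp a (F₁ + F₂) = fwdDiffOp a F₁ + fwdDiffOp a F₂ := by
  funext x
  simp only [fwdDiffOp, Pi.add_apply]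
  abel

lemma fwdDiffOp_neg_right (a : G) (F : G → M) : fwdDiffOp a (-F) = -fwdDiffOp a F := by
  funext x
  simp only [fwdDiffOp, Pi.neg_apply]
  abel

lemma fwdDiffOp_comm (a b : G) (F : G → M) :
    fwdDiffOp a (fwdDiffOp b F) = fwdDiffOp b (fwdDiffOp a F) := by
  funext x
  simp only [fwdDiffOp, add_right_comm x a b]
  abel

lemma fwdDiffOp_zero_right (a : G) : fwdDiffOp a (0 : G → M) = 0 := by
  funext x
  simp [fwdDiffOp]

lemma fwdDiffOp_zero_left (F : G → M) : fwdDiffOp (0 : G) F = 0 := by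
  funext x
  simp [fwdDiffOp]

lemma fwdDiffOp_add_left (a b : G) (F : G → M) :
    fwdDiffOp (a + b) F = transOp b (fwdDiffOp a F) + fwdDiffOp b F := by
  funext x
  simp only [fwdDiffOp, transOp, Pi.add_apply, add_assoc, add_comm b a]
  exact (sub_add_sub_cancel _ _ _).symm

lemma fwdDiffOp_neg_left (a : G) (F : G → M) :
    fwdDiffOp (-a) F = -transOp (-a) (fwdDiffOp a F) := by
  funext x
  simp [fwdDiffOp, transOp]

lemma fwdDiffOp_transOp (a b : G) (F : G → M) :
    fwdDiffOp a (transOp b F) = transOp b (fwdDiffOp a F) := by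
  funext x
  simp only [fwdDiffOp, transOp, add_right_comm]

lemma mixedDiff_append (l₁ l₂ : List G) (F : G → M) :
    mixedDiff (l₁ ++ l₂) F = mixedDiff l₁ (mixedDiff l₂ F) := by
  induction l₁ with
  | nil => rfl
  | cons a t ih => simp only [List.cons_append, mixedDiff, ih]

lemma mixedDiff_zero (l : List G) : mixedDiff l (0 : G → M) = 0 := by
  induction l with
  | nil => rfl
  | cons a t ih => rw [mixedDiff, ih, fwdDiffOp_zero_right]

lemma mixedDiff_replicate (m : ℕ) (a : G) (F : G → M) :
    mixedDiff (List.replicate m a) F = (fwdDiffOp a)^[m] F := by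
  induction m with
  | zero => rfl
  | succ k ih => rw [List.replicate_succ, mixedDiff, ih, Function.iterate_succ_apply']

theorem List.Perm.mixedDiff_eq {l l' : List G} (hp : l.Perm l') (F : G → M) :
    mixedDiff l F = mixedDiff l' F := by
  induction hp with
  | nil => rfl
  | cons a _ ih => rw [mixedDiff, ih, mixedDiff]
  | swap a b t => exact fwdDiffOp_comm b a _
  | trans _ _ ih₁ ih₂ => rw [ih₁, ih₂]

section Subgroup

variable {ι : Type*} (h : ι → G) (f : G → M)

def diffSpan (m : ℕ) : AddSubgroup (G → M) :=
  AddSubgroup.closure {F | ∃ (a : G) (l : List ι), l.length = m ∧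
    F = transOp a (mixedDiff (l.map h) f)}

variable {h f}

lemma transOp_mem_diffSpan {m : ℕ} (b : G) {F : G → M} (hF : F ∈ diffSpan h f m) :
    transOp b F ∈ diffSpan h f m := by
  induction hF using AddSubgroup.closure_induction with
  | mem F hF =>
    obtain ⟨a, l, hl, rfl⟩ := hF
    exact AddSubgroup.subset_closure ⟨b + a, l, hl, transOp_transOp b a _⟩
  | zero => exact zero_mem _
  | add _ _ _ _ h₁ h₂ => exact add_mem h₁ h₂
  | neg _ _ hF => exact neg_mem hF

lemma fwdDiffOp_generator_mem_diffSpan {m : ℕ} (i : ι) {F : G → M}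
    (hF : F ∈ diffSpan h f m) : fwdDiffOp (h i) F ∈ diffSpan h f (m + 1) := by
  induction hF using AddSubgroup.closure_induction with
  | mem F hF =>
    obtain ⟨a, l, hl, rfl⟩ := hF
    exact AddSubgroup.subset_closure
      ⟨a, i :: l, by rw [List.length_cons, hl], fwdDiffOp_transOp _ _ _⟩
  | zero => rw [fwdDiffOp_zero_right]; exact zero_mem _
  | add F₁ F₂ _ _ h₁ h₂ => rw [fwdDiffOp_add_right]; exact add_mem h₁ h₂
  | neg F _ hF => rw [fwdDiffOp_neg_right]; exact neg_mem hF

lemma fwdDiffOp_mem_diffSpan {m : ℕ} {g : G} (hg : g ∈ AddSubgroup.closure (Set.range h))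
    {F : G → M} (hF : F ∈ diffSpan h f m) : fwdDiffOp g F ∈ diffSpan h f (m + 1) := by
  induction hg using AddSubgroup.closure_induction with
  | mem g hg =>
    obtain ⟨i, rfl⟩ := hg
    exact fwdDiffOp_generator_mem_diffSpan i hF
  | zero => rw [fwdDiffOp_zero_left]; exact zero_mem _
  | add a b _ _ ha hb => rw [fwdDiffOp_add_left]; exact add_mem (transOp_mem_diffSpan b ha) hb
  | neg a _ ha => rw [fwdDiffOp_neg_left]; exact neg_mem (transOp_mem_diffSpan (-a) ha)

lemma mixedDiff_mem_diffSpan {l : List G}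
    (hl : ∀ a ∈ l, a ∈ AddSubgroup.closure (Set.range h)) :
    mixedDiff l f ∈ diffSpan h f l.length := by
  induction l with
  | nil => exact AddSubgroup.subset_closure ⟨0, [], rfl, (transOp_zero _).symm⟩
  | cons a t ih =>
    exact fwdDiffOp_mem_diffSpan (hl a List.mem_cons_self)
      (ih fun b hb => hl b (List.mem_cons_of_mem a hb))

lemma List.exists_lt_count_of_sum_lt_length [Fintype ι] [DecidableEq ι] (n : ι → ℕ)
    {l : List ι} (hl : ∑ k, n k < l.length) : ∃ k, n k < l.count k := by
  by_contra! hcount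
  have hsum : ∑ k, l.count k = l.length := by
    simpa using Multiset.sum_count_eq_card (s := Finset.univ) (m := (l : Multiset ι)) (by simp)
  have := Finset.sum_le_sum fun k (_ : k ∈ Finset.univ) => hcount k
  omega

variable [DecidableEq ι] {n : ι → ℕ}

lemma mixedDiff_map_eq_zero_of_lt_count (hf : ∀ k, (fwdDiffOp (h k))^[n k + 1] f = 0)
    {l : List ι} {k : ι} (hk : n k < l.count k) : mixedDiff (l.map h) f = 0 := by
  obtain ⟨rest, hperm⟩ :=
    (List.replicate_sublist_iff.mpr hk : (List.replicate (n k + 1) k).Sublist l).exists_perm_append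
  rw [((hperm.trans List.perm_append_comm).map h).mixedDiff_eq, List.map_append,
    mixedDiff_append, List.map_replicate, mixedDiff_replicate, hf k, mixedDiff_zero]

lemma diffSpan_eq_bot [Fintype ι] (hf : ∀ k, (fwdDiffOp (h k))^[n k + 1] f = 0) {m : ℕ}
    (hm : ∑ k, n k < m) : diffSpan h f m = ⊥ := by
  refine AddSubgroup.closure_eq_bot_iff.mpr ?_
  rintro F ⟨a, l, rfl, rfl⟩
  obtain ⟨k, hk⟩ := List.exists_lt_count_of_sum_lt_length n hm
  rw [mixedDiff_map_eq_zero_of_lt_count hf hk]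
  rfl

theorem mixedDiff_eq_zero_of_forall_mem_closure [Fintype ι]
    (hf : ∀ k, (fwdDiffOp (h k))^[n k + 1] f = 0) {l : List G} (hlen : ∑ k, n k < l.length)
    (hl : ∀ a ∈ l, a ∈ AddSubgroup.closure (Set.range h)) : mixedDiff l f = 0 := by
  simpa [diffSpan_eq_bot hf hlen] using mixedDiff_mem_diffSpan (f := f) hl

end Subgroup

section Topology

variable [TopologicalSpace G] [ContinuousAdd G] [TopologicalSpace M] [ContinuousSub M]

lemma continuous_mixedDiff_ofFn {F : G → M} (hF : Continuous F) :
    ∀ m, Continuous fun p : (Fin m → G) × G => mixedDiff (List.ofFn p.1) F p.2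
  | 0 => hF.comp continuous_snd
  | m + 1 => by
    have ih := continuous_mixedDiff_ofFn hF m
    simp only [List.ofFn_succ, mixedDiff, fwdDiffOp]
    have htail : Continuous fun p : (Fin (m + 1) → G) × G => fun i : Fin m => p.1 i.succ :=
      continuous_pi fun i => (continuous_apply i.succ).comp continuous_fst
    have hshift : Continuous fun p : (Fin (m + 1) → G) × G => p.2 + p.1 0 :=
      continuous_snd.add ((continuous_apply 0).comp continuous_fst)
    exact (ih.comp (htail.prodMk hshift)).sub (ih.comp (htail.prodMk continuous_snd))

theorem mixedDiff_ofFn_eq_zero_of_dense [T2Space M] {S : Set G} (hS : Dense S) {F : G → M}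
    (hF : Continuous F) {m : ℕ}
    (hzero : ∀ g : Fin m → G, (∀ i, g i ∈ S) → mixedDiff (List.ofFn g) F = 0)
    (g : Fin m → G) : mixedDiff (List.ofFn g) F = 0 := by
  have hcont : Continuous fun g : Fin m → G => mixedDiff (List.ofFn g) F :=
    continuous_pi fun x =>
      (continuous_mixedDiff_ofFn hF m).comp (continuous_id.prodMk continuous_const)
  refine congrFun (hcont.ext_on (dense_pi Set.univ fun _ _ => hS) continuous_const ?_) g
  intro g hg
  exact hzero g fun i => hg i (Set.mem_univ i)

end Topology

end Montel

/-- **Montel-type theorem, unmixed differences, topological version.**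
If `h 1, …, h s` topologically generate the commutative topological group `G`,
`f` is continuous and `Δ_{h k}^{n k + 1} f = 0` for each `k`, then `f` is a polynomial
of degree at most `N = n 1 + ⋯ + n s`. -/
theorem montel_unmixed_topological {G : Type*} [AddCommGroup G] [TopologicalSpace G]
    [IsTopologicalAddGroup G] {s : ℕ}
    (h : Fin s → G) (n : Fin s → ℕ)
    (hgen : closure ((AddSubgroup.closure (Set.range h) : AddSubgroup G) : Set G) = Set.univ)
    (f : G → ℂ) (hcont : Continuous f)
    (hf : ∀ k : Fin s, (fwdDiffOp (h k))^[n k + 1] f = 0) :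
    ∀ g : Fin ((∑ k, n k) + 1) → G, mixedDiff (List.ofFn g).reverse f = 0 := by
  intro g
  rw [(List.reverse_perm _).mixedDiff_eq]
  refine mixedDiff_ofFn_eq_zero_of_dense (dense_iff_closure_eq.mpr hgen) hcont (fun g' hg' => ?_) g
  refine mixedDiff_eq_zero_of_forall_mem_closure hf (by simp) fun a ha => ?_
  obtain ⟨i, rfl⟩ := List.mem_ofFn.mp ha
  exact hg' i
end
end

section
/- Let h_1, …, h_s ∈ ℝ^d topologically generate ℝ^d (the closure of h_1ℤ + ⋯ + h_sℤ is ℝ^d), and let n_1, …, n_s be nonnegative integers. If f : ℝ^d → ℂ is continuous and satisfies Δ_{h_k}^{n_k + 1} f = 0 for every k = 1, …, s, then f is an ordinary polynomial function in d real variables of total degree at most n_1 + ⋯ + n_s (i.e. f(x) = P(x_1, …, x_d) for a polynomial P with complex coefficients of total degree ≤ n_1 + ⋯ + n_s). -/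
noncomputable section

/-!
Put `N = ∑ n k`. Since `Δ_(a + b) = Δ_a τ_b + Δ_b` and `Δ_(-a) = -τ_(-a) Δ_a`, with `τ` a
translation, a difference along any element of the group `Γ` generated by the `h k` uses up one
unit of the budget `N - ∑ m k` of a function killed by every `Δ_(h k)^(m k + 1)`. As `f` starts
with budget `N`, `Δ_g^(N + 1) f = 0` for `g ∈ Γ`, and then for every `g` because `Γ` is dense.

By Newton's formula such a function is, along every progression `x + j t`, a polynomial of degree
`≤ N` in `j`. On the line it therefore agrees with its Lagrange interpolant at `0, …, N` along
every progression through these nodes, in particular at every rational point, hence everywhere.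
Interpolating in the first coordinate gives a polynomial by induction on the dimension, and
restricting it to lines through `0` shows that its homogeneous components of degree `> N` vanish.
-/

open Finset Function Polynomial

theorem fwdDiffOp_eq_fwdDiff {G M : Type*} [AddCommGroup G] [AddCommGroup M] (a : G) :
    (fwdDiffOp a : (G → M) → G → M) = fwdDiff a :=
  rfl

section Monoid

variable {G M : Type*} [AddCommMonoid G] [AddCommGroup M]

theorem fwdDiff_iter_eq_zero_of_le {t : G} {φ : G → M} {n m : ℕ}
    (hφ : (fwdDiff t)^[n] φ = 0) (hnm : n ≤ m) : (fwdDiff t)^[m] φ = 0 := by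
  obtain ⟨c, rfl⟩ := Nat.exists_eq_add_of_le' hnm
  rw [iterate_add_apply, hφ]
  exact iterate_fixed (fwdDiff_const t 0) c

theorem fwdDiff_iter_comp_of_map_add {H : Type*} [AddCommMonoid H] {F : H → G} {t : H} {δ : G}
    (hF : ∀ u, F (u + t) = F u + δ) (f : G → M) (n : ℕ) :
    (fwdDiff t)^[n] (f ∘ F) = (fwdDiff δ)^[n] f ∘ F := by
  induction n with
  | zero => rfl
  | succ n ih =>
    rw [iterate_succ_apply', iterate_succ_apply', ih]
    funext u
    simp only [fwdDiff, comp_apply, hF]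

theorem fwdDiff_iter_comp_eq_zero_of_map_add {H : Type*} [AddCommMonoid H] {F : H → G} {t : H}
    {δ : G} (hF : ∀ u, F (u + t) = F u + δ) {f : G → M} {n : ℕ}
    (hf : (fwdDiff δ)^[n] f = 0) : (fwdDiff t)^[n] (f ∘ F) = 0 := by
  rw [fwdDiff_iter_comp_of_map_add hF, hf]
  rfl

theorem commute_fwdDiff (a b : G) :
    Function.Commute (fwdDiff a : (G → M) → G → M) (fwdDiff b) := by
  intro f
  funext x
  simp only [fwdDiff, add_right_comm x a b]
  abel

theorem fwdDiff_add_left (a b : G) (f : G → M) :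
    fwdDiff (a + b) f = fwdDiff a (fun x => f (x + b)) + fwdDiff b f := by
  funext x
  simp only [fwdDiff, Pi.add_apply, add_right_comm x a b, ← add_assoc]
  abel

theorem fwdDiff_zero_left (f : G → M) : fwdDiff (0 : G) f = 0 := by
  funext x
  simp [fwdDiff]

end Monoid

section Group

variable {G M : Type*} [AddCommGroup G] [AddCommGroup M]

theorem fwdDiff_neg_left (a : G) (f : G → M) :
    fwdDiff (-a) f = -fun x => fwdDiff a f (x + -a) := by
  funext x
  simp [fwdDiff]

variable {ι : Type*} [Fintype ι] (h : ι → G)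

variable (M) in
def diffFiltration (N w : ℕ) : Submodule ℤ (G → M) :=
  Submodule.span ℤ
    {φ | ∃ m : ι → ℕ, ∑ k, m k + w ≤ N ∧ ∀ k, (fwdDiff (h k))^[m k + 1] φ = 0}

variable {h}

theorem diffFiltration_eq_bot {N w : ℕ} (hw : N < w) : diffFiltration M h N w = ⊥ := by
  rw [diffFiltration, Submodule.span_eq_bot]
  rintro φ ⟨m, hm, -⟩
  omega

theorem comp_add_mem_diffFiltration {N w : ℕ} (b : G) {φ : G → M}
    (hφ : φ ∈ diffFiltration M h N w) : (fun x => φ (x + b)) ∈ diffFiltration M h N w := by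
  induction hφ using Submodule.span_induction with
  | mem ψ hψ =>
    obtain ⟨m, hm, hψ⟩ := hψ
    refine Submodule.subset_span ⟨m, hm, fun k => funext fun x => ?_⟩
    rw [fwdDiff_iter_comp_add, hψ k, Pi.zero_apply, Pi.zero_apply]
  | zero => exact Submodule.zero_mem _
  | add ψ χ _ _ hψ hχ => exact Submodule.add_mem _ hψ hχ
  | smul c ψ _ hψ => exact Submodule.smul_mem _ c hψ

theorem fwdDiff_mem_diffFiltration_of_generator {N w : ℕ} (j : ι) {φ : G → M}
    (hφ : φ ∈ diffFiltration M h N w) : fwdDiff (h j) φ ∈ diffFiltration M h N (w + 1) := by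
  induction hφ using Submodule.span_induction with
  | mem ψ hψ =>
    classical
    obtain ⟨m, hm, hψ⟩ := hψ
    rcases hj : m j with _ | r
    · have hψj := hψ j
      rw [hj, zero_add, iterate_one] at hψj
      rw [hψj]
      exact Submodule.zero_mem _
    refine Submodule.subset_span ⟨update m j r, ?_, fun k => ?_⟩
    · have := Finset.sum_update_of_mem (mem_univ j) m r
      have := Finset.sum_eq_add_sum_sdiff_singleton_of_mem (mem_univ j) m
      omega
    · rcases eq_or_ne k j with rfl | hk
      · rw [update_self, ← iterate_succ_apply, ← hj]
        exact hψ k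
      · rw [update_of_ne hk, (commute_fwdDiff _ _).iterate_left, hψ k]
        exact fwdDiff_const _ _
  | zero => exact (fwdDiff_const (h j) (0 : M)) ▸ Submodule.zero_mem _
  | add ψ χ _ _ hψ hχ => rw [fwdDiff_add]; exact Submodule.add_mem _ hψ hχ
  | smul c ψ _ hψ => rw [fwdDiff_const_smul]; exact Submodule.smul_mem _ c hψ

theorem fwdDiff_mem_diffFiltration {N w : ℕ} {g : G}
    (hg : g ∈ AddSubgroup.closure (Set.range h)) {φ : G → M}
    (hφ : φ ∈ diffFiltration M h N w) :
    fwdDiff g φ ∈ diffFiltration M h N (w + 1) := by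
  induction hg using AddSubgroup.closure_induction generalizing φ with
  | mem _ hg =>
    obtain ⟨j, rfl⟩ := hg
    exact fwdDiff_mem_diffFiltration_of_generator j hφ
  | zero => rw [fwdDiff_zero_left]; exact Submodule.zero_mem _
  | add a b _ _ ha hb =>
    rw [fwdDiff_add_left]
    exact Submodule.add_mem _ (ha (comp_add_mem_diffFiltration b hφ)) (hb hφ)
  | neg a _ ha =>
    rw [fwdDiff_neg_left]
    exact Submodule.neg_mem _ (comp_add_mem_diffFiltration (-a) (ha hφ))

theorem fwdDiff_iter_eq_zero_of_mem_closure {n : ι → ℕ} {f : G → M}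
    (hf : ∀ k, (fwdDiff (h k))^[n k + 1] f = 0) {g : G}
    (hg : g ∈ AddSubgroup.closure (Set.range h)) : (fwdDiff g)^[∑ k, n k + 1] f = 0 := by
  have hmem : ∀ w, (fwdDiff g)^[w] f ∈ diffFiltration M h (∑ k, n k) w := by
    intro w
    induction w with
    | zero => exact Submodule.subset_span ⟨n, le_of_eq (add_zero _), hf⟩
    | succ w ih => rw [iterate_succ_apply']; exact fwdDiff_mem_diffFiltration hg ih
  simpa [diffFiltration_eq_bot (lt_add_one _)] using hmem (∑ k, n k + 1)

end Group

section Topology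

variable {G M : Type*} [AddCommGroup G] [TopologicalSpace G] [ContinuousAdd G]
  [AddCommGroup M] [TopologicalSpace M] [IsTopologicalAddGroup M] [T2Space M]

theorem isClosed_setOf_fwdDiff_iter_eq_zero {f : G → M} (hf : Continuous f) (n : ℕ) :
    IsClosed {g : G | (fwdDiff g)^[n] f = 0} := by
  simp only [funext_iff, Pi.zero_apply, Set.ofPred_forall]
  refine isClosed_iInter fun x => isClosed_eq ?_ continuous_const
  simp only [fwdDiff_iter_eq_sum_shift]
  fun_prop

theorem fwdDiff_iter_eq_zero_of_dense {S : Set G} (hS : Dense S) {f : G → M} (hf : Continuous f)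
    {n : ℕ} (hSf : ∀ g ∈ S, (fwdDiff g)^[n] f = 0) (g : G) : (fwdDiff g)^[n] f = 0 :=
  (isClosed_setOf_fwdDiff_iter_eq_zero hf n).closure_subset_iff.2 hSf (hS g)

end Topology

section Newton

variable {K G : Type*} [Field K] [CharZero K] [AddCommMonoid G]

theorem exists_polynomial_eq_on_progression {φ : G → K} {t : G} {N : ℕ}
    (hφ : (fwdDiff t)^[N + 1] φ = 0) (x : G) :
    ∃ Q : K[X], Q.natDegree ≤ N ∧ ∀ j : ℕ, φ (x + j • t) = Q.eval (j : K) := by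
  set a : ℕ → ℕ → K := fun j k => j.choose k • (fwdDiff t)^[k] φ x
  have ha {j k : ℕ} (hk : j < k ∨ N < k) : a j k = 0 := by
    rcases hk with hk | hk
    · simp [a, Nat.choose_eq_zero_of_lt hk]
    · simp [a, fwdDiff_iter_eq_zero_of_le hφ hk]
  -- Newton's forward-difference formula, with `j.choose k` written as `descPochhammer k / k!`.
  refine ⟨∑ k ∈ range (N + 1), C ((fwdDiff t)^[k] φ x / k.factorial) * descPochhammer K k,
    natDegree_sum_le_of_forall_le _ _ fun k hk => ?_, fun j => ?_⟩
  · refine (natDegree_C_mul_le _ _).trans ?_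
    rw [descPochhammer_natDegree]
    exact Nat.lt_succ_iff.1 (mem_range.1 hk)
  · have hext (M : ℕ) (hM : M = j ∨ M = N) :
        ∑ k ∈ range (M + 1), a j k = ∑ k ∈ range (j + N + 1), a j k := by
      refine sum_subset (range_subset_range.2 (by omega)) fun k _ hk => ha ?_
      simp only [mem_range] at hk
      omega
    calc φ (x + j • t) = ∑ k ∈ range (j + 1), a j k := shift_eq_sum_fwdDiff_iter t φ j x
      _ = ∑ k ∈ range (N + 1), a j k := by rw [hext j (.inl rfl), hext N (.inr rfl)]
      _ = _ := by
        rw [eval_finsetSum]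
        refine sum_congr rfl fun k _ => ?_
        rw [eval_mul, eval_C, descPochhammer_eval_eq_descFactorial,
          Nat.descFactorial_eq_factorial_mul_choose]
        have : (k.factorial : K) ≠ 0 := Nat.cast_ne_zero.2 k.factorial_ne_zero
        simp only [a, nsmul_eq_mul, Nat.cast_mul]
        field_simp

theorem eq_eval_of_fwdDiff_iter_eq_zero_of_card_lt {φ : G → K} {t : G} {N : ℕ}
    (hφ : (fwdDiff t)^[N + 1] φ = 0) {x : G} {q : K[X]} (hq : q.natDegree ≤ N) {S : Finset ℕ}
    (hS : N < #S) (hSq : ∀ j ∈ S, φ (x + j • t) = q.eval (j : K)) (j : ℕ) :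
    φ (x + j • t) = q.eval (j : K) := by
  obtain ⟨Q, hQ, hQφ⟩ := exists_polynomial_eq_on_progression hφ x
  have hdeg {p : K[X]} (hp : p.natDegree ≤ N) : p.degree < #S :=
    (degree_le_of_natDegree_le hp).trans_lt (by exact_mod_cast hS)
  have hQq : Q = q := eq_of_degrees_lt_of_eval_index_eq S Nat.cast_injective.injOn (hdeg hQ)
    (hdeg hq) fun i hi => (hQφ i).symm.trans (hSq i hi)
  rw [hQφ, hQq]

end Newton

section OneVariable

theorem eq_eval_on_real_progression {φ : ℝ → ℂ} {t : ℝ} {N : ℕ}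
    (hφ : (fwdDiff t)^[N + 1] φ = 0) {x : ℝ} {p : ℂ[X]} (hp : p.natDegree ≤ N) {S : Finset ℕ}
    (hS : N < #S) (hSp : ∀ j ∈ S, φ (x + j • t) = p.eval ↑(x + j • t)) (j : ℕ) :
    φ (x + j • t) = p.eval ↑(x + j • t) := by
  set q := p.comp (C (x : ℂ) + C (t : ℂ) * X)
  have hq (j : ℕ) : p.eval ↑(x + j • t) = q.eval (j : ℂ) := by
    simp only [q, eval_comp, eval_add, eval_mul, eval_C, eval_X, nsmul_eq_mul]
    push_cast
    ring_nf
  have hdeg : q.natDegree ≤ N := by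
    refine natDegree_comp_le.trans ?_
    have : (C (x : ℂ) + C (t : ℂ) * X).natDegree ≤ 1 := by compute_degree
    nlinarith
  rw [hq]
  exact eq_eval_of_fwdDiff_iter_eq_zero_of_card_lt hφ hdeg hS (fun j hj => hq j ▸ hSp j hj) j

theorem eq_eval_ratCast_of_fwdDiff_iter_eq_zero {N : ℕ} {φ : ℝ → ℂ}
    (hφ : ∀ t, (fwdDiff t)^[N + 1] φ = 0) {p : ℂ[X]} (hp : p.natDegree ≤ N)
    (hnodes : ∀ i ≤ N, φ i = p.eval (i : ℂ)) (r : ℚ) : φ r = p.eval ↑(r : ℝ) := by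
  -- `r` and the nodes `0, …, N` all lie on the progression `-|r.num| + ℕ / r.den`.
  set K := r.num.natAbs
  set D := r.den
  have hD : (D : ℝ) ≠ 0 := Nat.cast_ne_zero.2 r.den_nz
  have hnode (i : ℕ) : (-K : ℝ) + ((K + i) * D) • (1 / D : ℝ) = i := by
    rw [nsmul_eq_mul]; push_cast; field_simp; ring
  have hr : (-K : ℝ) + (r.num + K * D).toNat • (1 / D : ℝ) = r := by
    have h0 : 0 ≤ r.num + K * D := by
      have : (K : ℤ) = |r.num| := Int.natCast_natAbs _
      nlinarith [neg_abs_le r.num, r.den_pos]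
    have hj : (((r.num + K * D).toNat : ℕ) : ℝ) = r.num + K * D := by
      exact_mod_cast Int.toNat_of_nonneg h0
    rw [nsmul_eq_mul, hj, Rat.cast_def]
    field_simp
    ring
  rw [← hr]
  refine eq_eval_on_real_progression (hφ (1 / D)) hp
    (S := (range (N + 1)).image fun i => (K + i) * D) ?_ ?_ _
  · rw [card_image_of_injective _ fun a b hab => ?_, card_range]
    · exact lt_add_one N
    · simpa using Nat.eq_of_mul_eq_mul_right r.den_pos hab
  · simp only [mem_image, mem_range]
    rintro _ ⟨i, hi, rfl⟩
    rw [hnode, Complex.ofReal_natCast]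
    exact hnodes i (Nat.lt_succ_iff.1 hi)

theorem natDegree_interpolate_range_le (N : ℕ) (r : ℕ → ℂ) :
    (Lagrange.interpolate (range (N + 1)) (Nat.cast : ℕ → ℂ) r).natDegree ≤ N := by
  have := Lagrange.degree_interpolate_lt r (Nat.cast_injective.injOn (s := range (N + 1)))
  rw [card_range] at this
  exact natDegree_le_of_degree_le (Order.le_of_lt_succ this)

theorem eq_interpolate_of_fwdDiff_iter_eq_zero {N : ℕ} {φ : ℝ → ℂ} (hc : Continuous φ)
    (hφ : ∀ t, (fwdDiff t)^[N + 1] φ = 0) (x : ℝ) :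
    φ x = (Lagrange.interpolate (range (N + 1)) (Nat.cast : ℕ → ℂ) fun m => φ m).eval ↑x := by
  set p := Lagrange.interpolate (range (N + 1)) (Nat.cast : ℕ → ℂ) fun m => φ m
  have hrat := eq_eval_ratCast_of_fwdDiff_iter_eq_zero hφ (p := p)
    (natDegree_interpolate_range_le N _) fun i hi =>
      (Lagrange.eval_interpolate_at_node (fun m : ℕ => φ m) Nat.cast_injective.injOn
        (mem_range.2 (Nat.lt_succ_of_le hi))).symm
  exact congrFun (Rat.denseRange_cast.equalizer hc
    (p.continuous.comp Complex.continuous_ofReal) (funext hrat)) x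

end OneVariable

theorem Fin.cons_add_cons {d : ℕ} {α : Type*} [Add α] (a b : α) (x y : Fin d → α) :
    (Fin.cons a x : Fin (d + 1) → α) + Fin.cons b y = Fin.cons (a + b) (x + y) := by
  ext i; refine Fin.cases ?_ ?_ i <;> simp

theorem exists_mvPolynomial_of_fwdDiff_iter_eq_zero {d N : ℕ} {f : (Fin d → ℝ) → ℂ}
    (hc : Continuous f) (hf : ∀ g, (fwdDiff g)^[N + 1] f = 0) :
    ∃ P : MvPolynomial (Fin d) ℂ, ∀ x, f x = MvPolynomial.eval (fun i => (x i : ℂ)) P := by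
  induction d with
  | zero => exact ⟨.C (f 0), fun x => by rw [Subsingleton.elim x 0, MvPolynomial.eval_C]⟩
  | succ d ih =>
    set L := Lagrange.basis (range (N + 1)) (Nat.cast : ℕ → ℂ)
    have hslice (m : ℕ) : ∃ Q : MvPolynomial (Fin d) ℂ,
        ∀ x, f (Fin.cons (m : ℝ) x) = MvPolynomial.eval (fun i => (x i : ℂ)) Q := by
      refine ih (hc.comp (continuous_const.finCons continuous_id)) fun g =>
        fwdDiff_iter_comp_eq_zero_of_map_add (fun x => ?_) (hf (Fin.cons 0 g))
      rw [Fin.cons_add_cons, add_zero]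
    choose Q hQ using hslice
    refine ⟨∑ m ∈ range (N + 1), MvPolynomial.rename Fin.succ (Q m) * aeval (.X 0) (L m),
      fun x => ?_⟩
    have hline := eq_interpolate_of_fwdDiff_iter_eq_zero
      (φ := fun t => f (Fin.cons t (Fin.tail x))) (hc.comp (by fun_prop))
      (fun t => fwdDiff_iter_comp_eq_zero_of_map_add
        (fun u => by rw [Fin.cons_add_cons, add_zero]) (hf (Fin.cons t 0))) (x 0)
    simp only [Fin.cons_self_tail, Lagrange.interpolate_apply, eval_finsetSum, eval_mul,
      eval_C] at hline
    rw [hline, map_sum]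
    refine sum_congr rfl fun m _ => ?_
    rw [map_mul, MvPolynomial.eval_rename, hQ]
    congr 1
    rw [aeval_def, hom_eval₂, MvPolynomial.eval_X]
    exact (eval₂_congr (RingHom.ext MvPolynomial.eval_C) rfl rfl).symm

namespace MvPolynomial

variable {σ R : Type*} [CommSemiring R]

theorem IsHomogeneous.eval_smul {P : MvPolynomial σ R} {k : ℕ} (hP : P.IsHomogeneous k) (c : R)
    (x : σ → R) : eval (c • x) P = c ^ k * eval x P := by
  rw [eval_eq, eval_eq, mul_sum]
  refine sum_congr rfl fun d hd => ?_
  have hdk : ∑ i ∈ d.support, d i = k := (hP.degree_eq_sum_deg_support hd).symm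
  simp only [Pi.smul_apply, smul_eq_mul, mul_pow, prod_mul_distrib, prod_pow_eq_pow_sum, hdk]
  ring

theorem eval_smul_eq_sum (P : MvPolynomial σ R) (c : R) (x : σ → R) :
    eval (c • x) P =
      ∑ k ∈ range (P.totalDegree + 1), c ^ k * eval x (homogeneousComponent k P) := by
  conv_lhs => rw [← sum_homogeneousComponent P]
  rw [map_sum]
  exact sum_congr rfl fun k _ => (homogeneousComponent_isHomogeneous k P).eval_smul c x

theorem totalDegree_le_of_homogeneousComponent_eq_zero {P : MvPolynomial σ R} {N : ℕ}
    (hP : ∀ k, N < k → homogeneousComponent k P = 0) : P.totalDegree ≤ N := by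
  rw [← sum_homogeneousComponent P]
  refine (totalDegree_finsetSum _ _).trans (Finset.sup_le fun k _ => ?_)
  rcases le_or_gt k N with hk | hk
  · exact (homogeneousComponent_isHomogeneous k P).totalDegree_le.trans hk
  · simp [hP k hk]

end MvPolynomial

open MvPolynomial in
theorem eval_homogeneousComponent_eq_zero_of_fwdDiff_iter_eq_zero {σ : Type*} {N : ℕ}
    {P : MvPolynomial σ ℂ}
    (hP : ∀ g : σ → ℝ, (fwdDiff g)^[N + 1] (fun x => eval (fun i => (x i : ℂ)) P) = 0)
    {k : ℕ} (hk : N < k) (v : σ → ℝ) :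
    eval (fun i => (v i : ℂ)) (homogeneousComponent k P) = 0 := by
  rcases lt_or_ge P.totalDegree k with hkP | hkP
  · rw [homogeneousComponent_eq_zero k P hkP, map_zero]
  set φ : ℝ → ℂ := fun t => eval (fun i => ((t • v) i : ℂ)) P
  have hφ (t : ℝ) : (fwdDiff t)^[N + 1] φ = 0 :=
    fwdDiff_iter_comp_eq_zero_of_map_add (F := (· • v)) (fun u => add_smul u t v) (hP (t • v))
  have hφc : Continuous φ := (continuous_eval P).comp (by fun_prop)
  set p := Lagrange.interpolate (range (N + 1)) (Nat.cast : ℕ → ℂ) fun m => φ m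
  set q : ℂ[X] := ∑ j ∈ range (P.totalDegree + 1),
    .C (eval (fun i => (v i : ℂ)) (homogeneousComponent j P)) * .X ^ j
  have hpq : p = q := by
    refine eq_of_infinite_eval_eq p q
      ((Set.infinite_range_of_injective Complex.ofReal_injective).mono ?_)
    rintro _ ⟨t, rfl⟩
    have hsmul : (fun i => ((t • v) i : ℂ)) = (t : ℂ) • fun i => (v i : ℂ) := by
      funext i; simp
    rw [Set.mem_ofPred_eq, ← eq_interpolate_of_fwdDiff_iter_eq_zero hφc hφ, eval_finsetSum]
    simp only [φ, hsmul, eval_smul_eq_sum, Polynomial.eval_mul, Polynomial.eval_C,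
      Polynomial.eval_pow, Polynomial.eval_X, mul_comm]
  have hcoeff := congrArg (Polynomial.coeff · k) hpq
  simp only [q, Polynomial.finsetSum_coeff, Polynomial.coeff_C_mul_X_pow] at hcoeff
  rw [sum_ite_eq, if_pos (mem_range.2 (Nat.lt_succ_of_le hkP)),
    coeff_eq_zero_of_natDegree_lt ((natDegree_interpolate_range_le N _).trans_lt hk)] at hcoeff
  exact hcoeff.symm

open MvPolynomial in
theorem totalDegree_le_of_fwdDiff_iter_eq_zero {σ : Type*} {N : ℕ} {P : MvPolynomial σ ℂ}
    (hP : ∀ g : σ → ℝ, (fwdDiff g)^[N + 1] (fun x => eval (fun i => (x i : ℂ)) P) = 0) :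
    P.totalDegree ≤ N := by
  refine totalDegree_le_of_homogeneousComponent_eq_zero fun k hk =>
    funext_set (fun _ => Set.range ((↑) : ℝ → ℂ))
      (fun _ => Set.infinite_range_of_injective Complex.ofReal_injective) fun x hx => ?_
  choose v hv using fun i => hx i (Set.mem_univ i)
  obtain rfl : (fun i => (v i : ℂ)) = x := funext hv
  rw [map_zero]
  exact eval_homogeneousComponent_eq_zero_of_fwdDiff_iter_eq_zero hP hk v

/-- **Montel-type theorem on `ℝ^d`.** If `h 1, …, h s` topologically generate `ℝ^d`,
`f : ℝ^d → ℂ` is continuous and `Δ_{h k}^{n k + 1} f = 0` for each `k`, then `f` is an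
ordinary polynomial function in `d` real variables of total degree at most `n 1 + ⋯ + n s`. -/
theorem montel_unmixed_Rd {d s : ℕ}
    (h : Fin s → (Fin d → ℝ)) (n : Fin s → ℕ)
    (hgen : closure ((AddSubgroup.closure (Set.range h) : AddSubgroup (Fin d → ℝ)) :
      Set (Fin d → ℝ)) = Set.univ)
    (f : (Fin d → ℝ) → ℂ) (hcont : Continuous f)
    (hf : ∀ k : Fin s, (fwdDiffOp (h k))^[n k + 1] f = 0) :
    ∃ P : MvPolynomial (Fin d) ℂ, P.totalDegree ≤ ∑ k, n k ∧
      ∀ x : Fin d → ℝ, f x = MvPolynomial.eval (fun i => (x i : ℂ)) P := by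
  simp only [fwdDiffOp_eq_fwdDiff] at hf
  have hΔ (g : Fin d → ℝ) : (fwdDiff g)^[∑ k, n k + 1] f = 0 :=
    fwdDiff_iter_eq_zero_of_dense (dense_iff_closure_eq.2 hgen) hcont
      (fun _ hg => fwdDiff_iter_eq_zero_of_mem_closure hf hg) g
  obtain ⟨P, hP⟩ := exists_mvPolynomial_of_fwdDiff_iter_eq_zero hcont hΔ
  refine ⟨P, totalDegree_le_of_fwdDiff_iter_eq_zero fun g => ?_, hP⟩
  rw [← funext hP]
  exact hΔ g
end
end

section
/- Let G be a commutative group, let n, s ≥ 1, and let {h_{i,j}} (1 ≤ i ≤ n, 1 ≤ j ≤ s) be elements of G such that for every (i_1, …, i_s) ∈ {1, …, n}^s the set {h_{i_1,1}, …, h_{i_s,s}} generates G as a group. Suppose f : G → ℂ satisfies Δ_{h_{n,k}} ⋯ Δ_{h_{2,k}} Δ_{h_{1,k}} f = 0 for every k = 1, …, s. Then f is a polynomial, i.e. there exists a nonnegative integer N such that Δ_{g_{N+1}} Δ_{g_N} ⋯ Δ_{g_1} f = 0 for all g_1, …, g_{N+1} ∈ G. -/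
/-!
Under `g ↦ δ_g - 1` the operators `Δ_g` become elements of the group algebra `ℂ[G]`, and the
elements of `ℂ[G]` killing `f` form an ideal. Put `a i k = (δ_{h i k} - 1)` and
`K = ⨅_idx ∑_j a (idx j) j`. Since every choice `idx` gives generators of `G`, each `δ_g - 1`
lies in `K`, while the hypothesis on `f` says that `∑_k ∏_i a i k` kills `f`. Finally
`K ^ (s (n - 1) + 1) ≤ ∑_k ∏_i a i k`: multiplying a product of the `a i j` by `K` lands in the
sum over `j` of products with one more factor, `a (idx j) j` for a row `idx j` not yet used in
column `j`, and after `s (n - 1) + 1` factors some column `k` is complete.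
-/

noncomputable section

open Finset

theorem Finset.exists_eq_univ_of_card_mul_lt_sum_card {ι κ : Type*} [Fintype ι] [Fintype κ]
    (σ : κ → Finset ι) (h : Fintype.card κ * (Fintype.card ι - 1) < ∑ j, #(σ j)) :
    ∃ j, σ j = univ := by
  by_contra! hne
  have hle : ∀ j ∈ univ, #(σ j) ≤ Fintype.card ι - 1 := fun j _ =>
    Nat.le_sub_one_of_lt ((card_lt_iff_ne_univ _).2 (hne j))
  have := sum_le_card_nsmul univ _ _ hle
  simp only [card_univ, smul_eq_mul] at this
  omega

@[to_additive]
theorem Finset.prod_prod_update_insert {ι κ M : Type*} [Fintype κ] [DecidableEq ι] [DecidableEq κ]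
    [CommMonoid M] (f : ι → κ → M) (σ : κ → Finset ι) {i : ι} {j : κ} (hi : i ∉ σ j) :
    ∏ j', ∏ i' ∈ Function.update σ j (insert i (σ j)) j', f i' j' =
      f i j * ∏ j', ∏ i' ∈ σ j', f i' j' := by
  rw [← mul_prod_erase univ _ (mem_univ j), ← mul_prod_erase univ _ (mem_univ j),
    Function.update_self, prod_insert hi, mul_assoc]
  congr 2
  refine prod_congr rfl fun j' hj' => ?_
  rw [Function.update_of_ne (ne_of_mem_erase hj')]

namespace Ideal

variable {A ι κ : Type*} [CommSemiring A] [Fintype ι] [Fintype κ] (a : ι → κ → Ideal A)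

theorem prod_prod_le_sum_prod_of_eq_univ {σ : κ → Finset ι} {j : κ} (hj : σ j = univ) :
    ∏ j, ∏ i ∈ σ j, a i j ≤ ∑ k, ∏ i, a i k := calc
  ∏ j, ∏ i ∈ σ j, a i j ≤ ∏ i, a i j :=
    le_of_dvd (hj ▸ dvd_prod_of_mem (fun j => ∏ i ∈ σ j, a i j) (mem_univ j))
  _ ≤ ∑ k, ∏ i, a i k := by
    rw [sum_eq_sup]
    exact le_sup (f := fun k => ∏ i, a i k) (mem_univ j)

theorem prod_prod_mul_iInf_sum_pow_le (r : ℕ) (σ : κ → Finset ι)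
    (hr : Fintype.card κ * (Fintype.card ι - 1) < ∑ j, #(σ j) + r) :
    (∏ j, ∏ i ∈ σ j, a i j) * (⨅ idx : κ → ι, ∑ j, a (idx j) j) ^ r ≤ ∑ k, ∏ i, a i k := by
  classical
  set K := ⨅ idx : κ → ι, ∑ j, a (idx j) j
  induction r generalizing σ with
  | zero =>
    obtain ⟨j, hj⟩ := exists_eq_univ_of_card_mul_lt_sum_card σ hr
    simpa using prod_prod_le_sum_prod_of_eq_univ a hj
  | succ r ih =>
    by_cases hfree : ∀ j, ∃ i, i ∉ σ j
    swap
    · push Not at hfree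
      obtain ⟨j, hj⟩ := hfree
      exact mul_le_left.trans (prod_prod_le_sum_prod_of_eq_univ a (eq_univ_of_forall hj))
    choose idx hidx using hfree
    calc (∏ j, ∏ i ∈ σ j, a i j) * K ^ (r + 1)
        = (∏ j, ∏ i ∈ σ j, a i j) * K * K ^ r := by rw [pow_succ', mul_assoc]
      _ ≤ (∏ j, ∏ i ∈ σ j, a i j) * (∑ j, a (idx j) j) * K ^ r := by
        gcongr
        exact iInf_le _ idx
      _ = ∑ j, (∏ j', ∏ i ∈ Function.update σ j (insert (idx j) (σ j)) j', a i j') * K ^ r := by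
        rw [mul_sum, sum_mul]
        refine sum_congr rfl fun j _ => ?_
        rw [prod_prod_update_insert a σ (hidx j), mul_comm (a (idx j) j)]
      _ ≤ ∑ k, ∏ i, a i k := by
        rw [sum_eq_sup (s := univ)]
        refine Finset.sup_le fun j _ => ih _ ?_
        have := sum_sum_update_insert (fun _ _ => 1) σ (hidx j)
        simp only [← card_eq_sum_ones] at this
        omega

theorem iInf_sum_pow_le_sum_prod :
    (⨅ idx : κ → ι, ∑ j, a (idx j) j) ^ (Fintype.card κ * (Fintype.card ι - 1) + 1) ≤
      ∑ k, ∏ i, a i k := by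
  have := prod_prod_mul_iInf_sum_pow_le a (Fintype.card κ * (Fintype.card ι - 1) + 1)
    (fun _ => ∅) (by simp)
  simpa only [prod_empty, prod_const_one, one_mul] using this

end Ideal

section GroupAlgebra

open AddMonoidAlgebra

variable {k G M : Type*} [CommRing k] [AddCommGroup G] [AddCommGroup M] [Module k M]

variable (k M) in
def translateHom : Multiplicative G →* Module.End k (G → M) where
  toFun g := LinearMap.funLeft k M (· + g.toAdd)
  map_one' := by ext; simp [LinearMap.funLeft_apply]
  map_mul' a b := by ext; simp [LinearMap.funLeft_apply, add_assoc]

variable (k M) in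
def translateAlgHom : k[G] →ₐ[k] Module.End k (G → M) :=
  AddMonoidAlgebra.lift k (Module.End k (G → M)) G (translateHom k M)

variable (k) in
def fwdDiffElem (g : G) : k[G] := single g 1 - 1

theorem translateAlgHom_fwdDiffElem (g : G) (f : G → M) :
    translateAlgHom k M (fwdDiffElem k g) f = fwdDiffOp g f := by
  ext x
  simp [translateAlgHom, fwdDiffElem, translateHom, LinearMap.funLeft_apply, fwdDiffOp]

theorem mixedDiff_eq_translateAlgHom (l : List G) (f : G → M) :
    mixedDiff l f = translateAlgHom k M (l.map (fwdDiffElem k)).prod f := by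
  induction l with
  | nil => simp [mixedDiff]
  | cons g l ih =>
    rw [mixedDiff, ih, List.map_cons, List.prod_cons, map_mul, Module.End.mul_apply,
      translateAlgHom_fwdDiffElem]

variable (k) in
theorem fwdDiffElem_mem_span_image {S : Set G} {g : G} (hg : g ∈ AddSubgroup.closure S) :
    fwdDiffElem k g ∈ Ideal.span (fwdDiffElem k '' S) := by
  induction hg using AddSubgroup.closure_induction with
  | mem x hx => exact Ideal.subset_span ⟨x, hx, rfl⟩
  | zero => simp [fwdDiffElem, ← one_def]
  | add x y _ _ hx hy =>
    have : fwdDiffElem k (x + y) = fwdDiffElem k x + single x 1 * fwdDiffElem k y := by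
      simp only [fwdDiffElem, mul_sub, single_mul_single, mul_one]
      ring
    rw [this]
    exact add_mem hx (Ideal.mul_mem_left _ _ hy)
  | neg x _ hx =>
    have : fwdDiffElem k (-x) = -(single (-x) 1 * fwdDiffElem k x) := by
      simp [fwdDiffElem, mul_sub, single_mul_single, ← one_def]
    rw [this]
    exact neg_mem (Ideal.mul_mem_left _ _ hx)

variable (k) in
def diffAnnihilator (f : G → M) : Ideal k[G] where
  carrier := {p | translateAlgHom k M p f = 0}
  add_mem' hp hq := by simp_all
  zero_mem' := by simp
  smul_mem' c p hp := by simp_all [Module.End.mul_apply]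

theorem mixedDiff_reverse_ofFn_eq_zero_iff {m : ℕ} (g : Fin m → G) (f : G → M) :
    mixedDiff (List.ofFn g).reverse f = 0 ↔ ∏ i, fwdDiffElem k (g i) ∈ diffAnnihilator k f := by
  rw [mixedDiff_eq_translateAlgHom (k := k), List.map_reverse, List.prod_reverse, List.map_ofFn,
    List.prod_ofFn]
  rfl

end GroupAlgebra

theorem montel_mixed_polynomial_general {G : Type*} [AddCommGroup G] {n s : ℕ}
    (h : Fin n → Fin s → G)
    (hgen : ∀ idx : Fin s → Fin n,
      AddSubgroup.closure (Set.range fun j : Fin s => h (idx j) j) = ⊤)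
    (f : G → ℂ)
    (hf : ∀ k : Fin s, mixedDiff (List.ofFn fun i : Fin n => h i k).reverse f = 0) :
    ∃ N : ℕ, ∀ g : Fin (N + 1) → G, mixedDiff (List.ofFn g).reverse f = 0 := by
  set a : Fin n → Fin s → Ideal (AddMonoidAlgebra ℂ G) := fun i j =>
    Ideal.span {fwdDiffElem ℂ (h i j)}
  have hK : ∀ g, fwdDiffElem ℂ g ∈ ⨅ idx : Fin s → Fin n, ∑ j, a (idx j) j := fun g => by
    refine Submodule.mem_iInf _ |>.2 fun idx => ?_
    have := fwdDiffElem_mem_span_image ℂ (hgen idx ▸ AddSubgroup.mem_top g)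
    rwa [← Set.range_comp, Ideal.span_range_eq_iSup, ← Finset.sup_univ_eq_iSup,
      ← Ideal.sum_eq_sup] at this
  have hI : ∑ k, ∏ i, a i k ≤ diffAnnihilator ℂ f := by
    simp only [a, Ideal.prod_span_singleton, Ideal.sum_eq_sup, Finset.sup_le_iff,
      Ideal.span_singleton_le_iff_mem]
    exact fun k _ => (mixedDiff_reverse_ofFn_eq_zero_iff _ f).1 (hf k)
  refine ⟨s * (n - 1), fun g => (mixedDiff_reverse_ofFn_eq_zero_iff g f).2 (hI ?_)⟩
  have hpow := Ideal.iInf_sum_pow_le_sum_prod a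
  simp only [Fintype.card_fin] at hpow
  apply hpow
  simpa using Ideal.prod_mem_prod (s := Finset.univ) fun m _ => hK (g m)

/-- **Montel-type theorem for mixed differences, polynomial case.**
If for every choice `(i_1, …, i_s) ∈ {1, …, n}^s` the set `{h i_1 1, …, h i_s s}` generates the
commutative group `G`, and `Δ_{h n k} ⋯ Δ_{h 1 k} f = 0` for each `k`, then `f` is a
polynomial: there is `N` with `Δ_{g_{N+1}} ⋯ Δ_{g_1} f = 0` for all `g_1, …, g_{N+1}`. -/
theorem montel_mixed_polynomial {G : Type*} [AddCommGroup G] {n s : ℕ} (hn : 1 ≤ n) (hs : 1 ≤ s)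
    (h : Fin n → Fin s → G)
    (hgen : ∀ idx : Fin s → Fin n,
      AddSubgroup.closure (Set.range fun j : Fin s => h (idx j) j) = ⊤)
    (f : G → ℂ)
    (hf : ∀ k : Fin s, mixedDiff (List.ofFn fun i : Fin n => h i k).reverse f = 0) :
    ∃ N : ℕ, ∀ g : Fin (N + 1) → G, mixedDiff (List.ofFn g).reverse f = 0 :=
  montel_mixed_polynomial_general h hgen f hf
end
end

section
/- Let G be a commutative group, let h_1, …, h_s ∈ G generate G as a group, and let f, P_1, …, P_s : G → ℂ be functions with each P_k an exponential polynomial and Δ_{h_k} f = P_k for every k = 1, …, s. Then the complex vector space V = span{f} + τ(P_1) + τ(P_2) + ⋯ + τ(P_s), where τ(g) = span{τ_h g : h ∈ G}, is a finite-dimensional translation-invariant subspace of ℂ^G containing f (i.e. τ_h(V) ⊆ V for every h ∈ G and dim V < ∞). -/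
/-!
Let `W = τ(P_1) + ⋯ + τ(P_s)`, a finite-dimensional translation-invariant space. By the cocycle
identity `τ_{a+b} f - f = τ_a (τ_b f - f) + (τ_a f - f)` and the invariance of `W`, the set of
`a` with `τ_a f - f ∈ W` is a subgroup of `G`; it contains every `h_k`, since
`τ_{h_k} f - f = Δ_{h_k} f = P_k`, hence it is all of `G`. So `τ_a f ∈ f + W` for every `a`,
which makes `span{f} + W` translation invariant.
-/

noncomputable section

section TranslationInvariant

variable {G R M : Type*} [AddCommGroup G] [Ring R] [AddCommGroup M] [Module R M]

def IsTranslationInvariant (V : Submodule R (G → M)) : Prop :=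
  ∀ a : G, ∀ v ∈ V, transOp a v ∈ V

theorem fwdDiffOp_eq_transOp_sub (h : G) (f : G → M) : fwdDiffOp h f = transOp h f - f := rfl

theorem transOp_zero_s8 {N : Type*} (f : G → N) : transOp 0 f = f := by
  funext x; simp [transOp]

theorem transOp_add_sub_self (a b : G) (f : G → M) :
    transOp (a + b) f - f = transOp a (transOp b f - f) + (transOp a f - f) := by
  funext x
  simp only [transOp, Pi.add_apply, Pi.sub_apply, add_assoc]
  abel

theorem transOp_neg_sub_self (a : G) (f : G → M) :
    transOp (-a) f - f = -transOp (-a) (transOp a f - f) := by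
  funext x
  simp [transOp]

theorem isTranslationInvariant_tauSpan (g : G → ℂ) : IsTranslationInvariant (tauSpan g) := by
  intro a v hv
  induction hv using Submodule.span_induction with
  | mem _ hv =>
    obtain ⟨b, rfl⟩ := hv
    refine Submodule.subset_span ⟨b + a, ?_⟩
    funext x
    simp only [transOp, add_assoc, add_comm b a]
  | zero => exact zero_mem _
  | add u w _ _ hu hw => exact add_mem hu hw
  | smul c u _ hu => exact Submodule.smul_mem _ c hu

theorem self_mem_tauSpan (g : G → ℂ) : g ∈ tauSpan g :=
  Submodule.subset_span ⟨0, transOp_zero_s8 g⟩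

namespace IsTranslationInvariant

variable {W : Submodule R (G → M)}

theorem iSup {ι : Sort*} {V : ι → Submodule R (G → M)}
    (hV : ∀ i, IsTranslationInvariant (V i)) : IsTranslationInvariant (⨆ i, V i) := by
  intro a v hv
  induction hv using Submodule.iSup_induction' with
  | mem i v hv => exact Submodule.mem_iSup_of_mem i (hV i a v hv)
  | zero => exact zero_mem _
  | add u w _ _ hu hw => exact add_mem hu hw

theorem transOp_sub_self_mem (hW : IsTranslationInvariant W) {S : Set G}
    (hS : AddSubgroup.closure S = ⊤) {f : G → M} (hf : ∀ b ∈ S, transOp b f - f ∈ W) (a : G) :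
    transOp a f - f ∈ W := by
  have ha : a ∈ AddSubgroup.closure S := hS ▸ AddSubgroup.mem_top a
  induction ha using AddSubgroup.closure_induction with
  | mem b hb => exact hf b hb
  | zero => simp [transOp_zero_s8]
  | add b c _ _ hb hc =>
    rw [transOp_add_sub_self]
    exact add_mem (hW b _ hc) hb
  | neg b _ hb =>
    rw [transOp_neg_sub_self]
    exact neg_mem (hW (-b) _ hb)

theorem span_singleton_sup (hW : IsTranslationInvariant W) {f : G → M}
    (hf : ∀ a : G, transOp a f - f ∈ W) :
    IsTranslationInvariant (Submodule.span R {f} ⊔ W) := by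
  intro a v hv
  obtain ⟨_, hy, w, hw, rfl⟩ := Submodule.mem_sup.mp hv
  obtain ⟨c, rfl⟩ := Submodule.mem_span_singleton.mp hy
  have hfa : transOp a f ∈ Submodule.span R {f} ⊔ W := by
    rw [← sub_add_cancel (transOp a f) f]
    exact add_mem (Submodule.mem_sup_right (hf a))
      (Submodule.mem_sup_left (Submodule.mem_span_singleton_self f))
  exact add_mem (Submodule.smul_mem _ c hfa) (Submodule.mem_sup_right (hW a w hw))

end IsTranslationInvariant

end TranslationInvariant

/-- The space `V = span{f} + τ(P 1) + ⋯ + τ(P s)` is a finite-dimensional translation-invariant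
subspace of `ℂ^G` containing `f`, whenever `h 1, …, h s` generate `G`, each `P k` is an
exponential polynomial and `Δ_{h k} f = P k` for every `k`. -/
theorem span_translates_finiteDimensional_invariant {G : Type*} [AddCommGroup G] {s : ℕ}
    (h : Fin s → G)
    (hgen : AddSubgroup.closure (Set.range h) = ⊤)
    (f : G → ℂ) (P : Fin s → G → ℂ)
    (hP : ∀ k : Fin s, IsExpPoly (P k))
    (hf : ∀ k : Fin s, fwdDiffOp (h k) f = P k) :
    f ∈ (Submodule.span ℂ {f} ⊔ ⨆ k : Fin s, tauSpan (P k)) ∧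
    (∀ a : G, ∀ v ∈ (Submodule.span ℂ {f} ⊔ ⨆ k : Fin s, tauSpan (P k)),
      transOp a v ∈ (Submodule.span ℂ {f} ⊔ ⨆ k : Fin s, tauSpan (P k))) ∧
    FiniteDimensional ℂ (Submodule.span ℂ {f} ⊔ ⨆ k : Fin s, tauSpan (P k) :
      Submodule ℂ (G → ℂ)) := by
  have hW : IsTranslationInvariant (⨆ k, tauSpan (P k)) :=
    .iSup fun k => isTranslationInvariant_tauSpan (P k)
  have hgenerators : ∀ b ∈ Set.range h, transOp b f - f ∈ ⨆ k, tauSpan (P k) := by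
    rintro _ ⟨k, rfl⟩
    rw [← fwdDiffOp_eq_transOp_sub, hf k]
    exact Submodule.mem_iSup_of_mem k (self_mem_tauSpan (P k))
  have : ∀ k, FiniteDimensional ℂ (tauSpan (P k)) := hP
  exact ⟨Submodule.mem_sup_left (Submodule.mem_span_singleton_self f),
    hW.span_singleton_sup (hW.transOp_sub_self_mem hgen hgenerators), inferInstance⟩

end
end

section
/- Let h_1, …, h_s ∈ ℝ^d be such that the subgroup h_1ℤ + h_2ℤ + ⋯ + h_sℤ is not dense in ℝ^d. Then there exists a continuous function f : ℝ^d → ℝ which satisfies Δ_{h_k} f = 0 for every k = 1, …, s but is not an ordinary polynomial function (in particular, f is not a polynomial and not an exponential polynomial, since it can be chosen non-differentiable). -/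
noncomputable section

/-!
Let `S` be the subgroup generated by the `h k` and take `f x = ‖x mod S‖ = dist(x, S)`, which is
continuous and `S`-periodic. Since `S` is a group, `f (n • x) ≤ n * f x`, so along `v / n` with
`v ∉ closure S` we get `f (v / n) ≥ f v / n`: `f` has a corner at its minimum `0`, hence is not
differentiable there and in particular not a polynomial.
-/

open Filter Topology

theorem fwdDiffOp_comp_mk_eq_zero {G M : Type*} [AddCommGroup G] [AddCommGroup M]
    {S : AddSubgroup G} (F : G ⧸ S → M) {a : G} (ha : a ∈ S) :
    fwdDiffOp a (fun x => F x) = 0 := by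
  funext x
  simp [fwdDiffOp, (QuotientAddGroup.eq_zero_iff a).2 ha]

theorem not_differentiableAt_zero_of_le_nsmul {E : Type*} [NormedAddCommGroup E]
    [NormedSpace ℝ E] {f : E → ℝ} (hf : ∀ x, 0 ≤ f x) (hsub : ∀ (n : ℕ) x, f (n • x) ≤ n * f x)
    {v : E} (hv : 0 < f v) : ¬ DifferentiableAt ℝ f 0 := by
  intro hd
  have hf0 : f 0 = 0 := le_antisymm (by simpa using hsub 0 0) (hf 0)
  have hmin : IsLocalMin f 0 := Eventually.of_forall fun x => hf0 ▸ hf x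
  have hF : HasFDerivAt f (0 : E →L[ℝ] ℝ) 0 := hmin.fderiv_eq_zero ▸ hd.hasFDerivAt
  have hg : HasDerivAt (fun t : ℝ => f (t • v)) 0 0 := by
    simpa [Function.comp_def] using
      hF.comp_hasDerivAt_of_eq (0 : ℝ) ((hasDerivAt_id 0).smul_const v) (zero_smul ℝ v).symm
  have hslope := (hasDerivAt_iff_tendsto_slope_zero.1 hg).comp
    ((tendsto_inv_atTop_nhdsGT_zero.comp tendsto_natCast_atTop_atTop).mono_right
      (nhdsGT_le_nhdsNE 0))
  have hbound : ∀ᶠ n : ℕ in atTop, f v ≤ (n : ℝ) * f ((n : ℝ)⁻¹ • v) := by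
    filter_upwards [eventually_ge_atTop 1] with n hn
    have hn' : (n : ℝ) ≠ 0 := by positivity
    calc f v = f (n • (n : ℝ)⁻¹ • v) := by
          rw [← Nat.cast_smul_eq_nsmul ℝ, smul_smul, mul_inv_cancel₀ hn', one_smul]
      _ ≤ n * f ((n : ℝ)⁻¹ • v) := hsub n _
  have : f v ≤ 0 := ge_of_tendsto hslope (by simpa [hf0] using hbound)
  linarith

theorem differentiable_mvPolynomial_eval {d : ℕ} (P : MvPolynomial (Fin d) ℝ) :
    Differentiable ℝ (fun x : Fin d → ℝ => MvPolynomial.eval x P) :=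
  differentiableOn_univ.1 (AnalyticOnNhd.eval_mvPolynomial P).differentiableOn

/-- **Necessity of the density condition (Remark 2).** If the subgroup
`h 1 ℤ + ⋯ + h s ℤ` is not dense in `ℝ^d`, then there is a continuous, non-differentiable
function `f : ℝ^d → ℝ` with `Δ_{h k} f = 0` for every `k` which is not an ordinary polynomial
function. -/
theorem exists_continuous_nonpolynomial_of_not_dense {d s : ℕ}
    (h : Fin s → (Fin d → ℝ))
    (hnd : closure ((AddSubgroup.closure (Set.range h) : AddSubgroup (Fin d → ℝ)) :
      Set (Fin d → ℝ)) ≠ Set.univ) :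
    ∃ f : (Fin d → ℝ) → ℝ, Continuous f ∧ (∀ k : Fin s, fwdDiffOp (h k) f = 0) ∧
      ¬ Differentiable ℝ f ∧
      ¬ ∃ P : MvPolynomial (Fin d) ℝ, ∀ x : Fin d → ℝ, f x = MvPolynomial.eval x P := by
  set S := AddSubgroup.closure (Set.range h)
  obtain ⟨v, hv⟩ := (Set.ne_univ_iff_exists_notMem _).1 hnd
  set f : (Fin d → ℝ) → ℝ := fun x => ‖(x : (Fin d → ℝ) ⧸ S)‖
  have hfv : 0 < f v :=
    (norm_nonneg _).lt_of_ne' (mt QuotientAddGroup.norm_mk_eq_zero_iff_mem_closure.1 hv)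
  have hsub (n : ℕ) (x : Fin d → ℝ) : f (n • x) ≤ n * f x := by
    simpa [f, QuotientAddGroup.mk_nsmul] using norm_nsmul_le (n := n) (a := (x : (Fin d → ℝ) ⧸ S))
  have hndiff : ¬ Differentiable ℝ f := fun hd =>
    not_differentiableAt_zero_of_le_nsmul (fun _ => norm_nonneg _) hsub hfv (hd 0)
  refine ⟨f, continuous_norm.comp continuous_quot_mk, fun k => ?_, hndiff, ?_⟩
  · exact fwdDiffOp_comp_mk_eq_zero _ (AddSubgroup.subset_closure ⟨k, rfl⟩)
  · rintro ⟨P, hP⟩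
    exact hndiff (funext hP ▸ differentiable_mvPolynomial_eval P)
end
end
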